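/- There exists a finite simple connected graph G with at least two vertices such that μ(G) > max over all pairs of adjacent vertices v_i ~ v_j of G of 2 + (m_i + m_j) − (d_i + d_j) + √(2·(d_i² + d_j²) − 4·(m_i + m_j) + 4). (This disproves conjectured edge-maximum bound 41 of Brankov, Hansen and Stevanović.) -/

import Mathlib

noncomputable section

open Finset

/-- The degree of a vertex, as a real number. -/
def degR {V : Type*} [Fintype V] (G : SimpleGraph V) (v : V) : ℝ :=
  letI := Classical.decRel G.Adj
  (G.degree v : ℝ)

/-- The average degree of the neighbours of a vertex, as a real number:
`m_v = (∑_{u ~ v} d_u) / d_v`. -/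
def avgDegR {V : Type*} [Fintype V] (G : SimpleGraph V) (v : V) : ℝ :=
  letI := Classical.decRel G.Adj
  (∑ u ∈ G.neighborFinset v, (G.degree u : ℝ)) / (G.degree v : ℝ)

/-- The largest eigenvalue of the Laplacian matrix `L = D - A` of a finite graph. -/
def lapSpecRad {V : Type*} [Fintype V] [DecidableEq V] [Nonempty V]
    (G : SimpleGraph V) : ℝ :=
  letI := Classical.decRel G.Adj
  ⨆ i, (SimpleGraph.posSemidef_lapMatrix ℝ G).isHermitian.eigenvalues i

/-! In the wheel `W₁₂` (a hub joined to every vertex of an 11-cycle) the hub is a universal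
vertex, so `n • e_hub - 1` is a Laplacian eigenvector with eigenvalue `n = 12`. The hub has
`d = 11, m = 3` and a rim vertex `d = 3, m = 17/3`, so a hub–rim edge gives
`-10/3 + √(688/3) < 12`, while on a rim edge the radicand is negative and the bound is `22/3`. -/

open Matrix

namespace SimpleGraph

variable {V : Type*} [Fintype V] {G : SimpleGraph V} [DecidableRel G.Adj]

theorem degR_eq (v : V) : degR G v = G.degree v := by
  unfold degR; congr!

theorem avgDegR_eq (v : V) :
    avgDegR G v = (∑ u ∈ G.neighborFinset v, (G.degree u : ℝ)) / G.degree v := by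
  unfold avgDegR; congr!

variable [DecidableEq V]

theorem lapSpecRad_eq [Nonempty V] :
    lapSpecRad G = ⨆ i, (posSemidef_lapMatrix ℝ G).isHermitian.eigenvalues i := by
  unfold lapSpecRad; congr!

theorem le_lapSpecRad_of_mulVec_eq_smul [Nonempty V] {μ : ℝ} {x : V → ℝ} (hx : x ≠ 0)
    (hμ : G.lapMatrix ℝ *ᵥ x = μ • x) : μ ≤ lapSpecRad G := by
  have hev : Module.End.HasEigenvalue (toLin' (G.lapMatrix ℝ)) μ :=
    Module.End.hasEigenvalue_of_hasEigenvector
      ⟨Module.End.mem_eigenspace_iff.2 (by simpa using hμ), hx⟩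
  rw [Module.End.hasEigenvalue_iff_mem_spectrum, spectrum_toLin',
    (posSemidef_lapMatrix ℝ G).isHermitian.spectrum_real_eq_range_eigenvalues] at hev
  obtain ⟨i, rfl⟩ := hev
  rw [lapSpecRad_eq]
  exact le_ciSup (Set.finite_range _).bddAbove i

theorem IsUniversal.lapMatrix_mulVec_single {v : V} (hv : G.IsUniversal v) :
    G.lapMatrix ℝ *ᵥ Pi.single v 1 = (Fintype.card V : ℝ) • Pi.single v 1 - 1 := by
  ext u
  rw [mulVec_single_one]
  have hdeg : G.degree v = Fintype.card V - 1 := (G.degree_eq_card_sub_one v).2 hv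
  have hcard : 1 ≤ Fintype.card V := Fintype.card_pos_iff.2 ⟨v⟩
  rcases eq_or_ne u v with rfl | huv
  · simp [lapMatrix, degMatrix, hdeg, hcard]
  · simp [lapMatrix, degMatrix, huv, (hv huv.symm).symm]

theorem IsUniversal.card_le_lapSpecRad [Nontrivial V] {v : V} (hv : G.IsUniversal v) :
    (Fintype.card V : ℝ) ≤ lapSpecRad G := by
  obtain ⟨w, hwv⟩ := exists_ne v
  refine le_lapSpecRad_of_mulVec_eq_smul (x := (Fintype.card V : ℝ) • Pi.single v 1 - 1) ?_ ?_
  · intro h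
    simpa [hwv] using congrFun h w
  · have hconst : G.lapMatrix ℝ *ᵥ 1 = 0 := G.lapMatrix_mulVec_const_eq_zero
    rw [mulVec_sub, mulVec_smul, hv.lapMatrix_mulVec_single, hconst, sub_zero]

/-- The hub is `0`; the rim vertex `k ∈ {1, …, n}` is joined to `k % n + 1`. -/
def wheelGraph (n : ℕ) : SimpleGraph (Fin (n + 1)) :=
  fromRel fun i j => i = 0 ∨ (j : ℕ) = i % n + 1

instance (n : ℕ) : DecidableRel (wheelGraph n).Adj := fun _ _ =>
  decidable_of_iff' _ (fromRel_adj _ _ _)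

theorem wheelGraph_isUniversal_zero (n : ℕ) : (wheelGraph n).IsUniversal 0 :=
  fun _ h => (fromRel_adj _ _ _).2 ⟨h, .inl (.inl rfl)⟩

theorem wheelGraph_eleven_degree :
    ∀ v, (wheelGraph 11).degree v = if v = 0 then 11 else 3 := by
  decide

theorem wheelGraph_eleven_sum_degree :
    ∀ v, ∑ u ∈ (wheelGraph 11).neighborFinset v, (wheelGraph 11).degree u =
      if v = 0 then 33 else 17 := by
  decide

theorem wheelGraph_eleven_degR (v : Fin 12) :
    degR (wheelGraph 11) v = if v = 0 then 11 else 3 := by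
  rw [degR_eq, wheelGraph_eleven_degree]
  split_ifs <;> norm_num

theorem wheelGraph_eleven_avgDegR (v : Fin 12) :
    avgDegR (wheelGraph 11) v = if v = 0 then 3 else 17 / 3 := by
  rw [avgDegR_eq, ← Nat.cast_sum, wheelGraph_eleven_sum_degree, wheelGraph_eleven_degree]
  split_ifs <;> norm_num

end SimpleGraph

open SimpleGraph

def edgeBound41 (di mi dj mj : ℝ) : ℝ :=
  2 + (mi + mj) - (di + dj) + √(2 * (di ^ 2 + dj ^ 2) - 4 * (mi + mj) + 4)

theorem edgeBound41_comm (di mi dj mj : ℝ) :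
    edgeBound41 di mi dj mj = edgeBound41 dj mj di mi := by
  unfold edgeBound41; ring_nf

theorem wheelGraph_eleven_edgeBound41_lt {i j : Fin 12} (hij : (wheelGraph 11).Adj i j) :
    edgeBound41 (degR (wheelGraph 11) i) (avgDegR (wheelGraph 11) i)
      (degR (wheelGraph 11) j) (avgDegR (wheelGraph 11) j) < 12 := by
  have hub_rim : edgeBound41 11 3 3 (17 / 3) < 12 := by
    have hsqrt : √(2 * ((11 : ℝ) ^ 2 + 3 ^ 2) - 4 * (3 + 17 / 3) + 4) < 46 / 3 := by
      rw [Real.sqrt_lt' (by norm_num)]; norm_num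
    unfold edgeBound41; linarith
  have rim_rim : edgeBound41 3 (17 / 3) 3 (17 / 3) = 22 / 3 := by
    rw [edgeBound41, Real.sqrt_eq_zero'.2 (by norm_num)]; norm_num
  simp only [wheelGraph_eleven_degR, wheelGraph_eleven_avgDegR]
  rcases eq_or_ne i 0 with rfl | hi
  · simpa [hij.ne.symm] using hub_rim
  rcases eq_or_ne j 0 with rfl | hj
  · simpa [hi, edgeBound41_comm] using hub_rim
  · simp only [hi, hj, if_false, rim_rim]; norm_num

/-- There exists a finite simple connected graph `G` with at least two vertices whose
Laplacian spectral radius exceeds the conjectured edge-maximum bound. -/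
theorem exists_counterexample_bound41 :
    ∃ (V : Type) (_ : Fintype V) (_ : DecidableEq V) (_ : Nonempty V)
      (G : SimpleGraph V), G.Connected ∧ 2 ≤ Fintype.card V ∧
      ∀ i j : V, G.Adj i j →
        (fun di mi dj mj => 2 + (mi + mj) - (di + dj) + Real.sqrt (2 * (di ^ 2 + dj ^ 2) - 4 * (mi + mj) + 4))
          (degR G i) (avgDegR G i) (degR G j) (avgDegR G j) < lapSpecRad G := by
  have hub := wheelGraph_isUniversal_zero 11
  have hspec : (12 : ℝ) ≤ lapSpecRad (wheelGraph 11) := by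
    simpa using hub.card_le_lapSpecRad
  refine ⟨Fin 12, inferInstance, inferInstance, inferInstance, wheelGraph 11,
    .of_isUniversal hub, by simp, fun i j hij => ?_⟩
  exact (wheelGraph_eleven_edgeBound41_lt hij).trans_le hspec
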